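/- Let p be an odd positive integer, let G be a finite simple graph, and set q = wcol_p(G). Then the chromatic number of the exact distance-p graph of G satisfies χ(G^[♮p]) ≤ (⌊p/2⌋+2)^q. -/

import Mathlib

open SimpleGraph

variable {V : Type*}

/-- The exact distance-`p` graph: distinct vertices adjacent iff their distance in `G` is exactly `p`. -/
def exactDistanceGraph (G : SimpleGraph V) (p : ℕ) : SimpleGraph V where
  Adj x y := x ≠ y ∧ G.Reachable x y ∧ G.dist x y = p
  symm := by
    refine ⟨?_⟩
    rintro x y ⟨h1, h2, h3⟩
    exact ⟨h1.symm, h2.symm, by rwa [SimpleGraph.dist_comm]⟩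
  loopless := by refine ⟨?_⟩; rintro x ⟨h1, -, -⟩; exact h1 rfl

/-- `x` is weakly `k`-accessible from `y` w.r.t. the linear order `L`. -/
def WeaklyAccessible (G : SimpleGraph V) (L : LinearOrder V) (k : ℕ) (x y : V) : Prop :=
  L.lt x y ∧ ∃ w : G.Walk x y, w.IsPath ∧ w.length ≤ k ∧
    ∀ z ∈ w.support, z ≠ x → z ≠ y → L.lt x z

/-- The weak `k`-colouring number. -/
noncomputable def wcol (G : SimpleGraph V) (k : ℕ) : ℕ :=
  1 + sInf { m : ℕ | ∃ L : LinearOrder V, ∀ y : V,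
      {x : V | WeaklyAccessible G L k x y}.ncard ≤ m }

/-!
Order the vertices so that every `y` has fewer than `q` weakly `p`-accessible vertices and colour
them greedily with `ρ : V → Fin q` so that weakly `p`-accessible pairs get distinct colours. Write
`p = 2s + 1`. The colour of `v` records, for each `i`, the least `k ≤ s` such that a vertex of
`ρ`-colour `i` reaches `v` by a walk of length `≤ k` staying above itself (or that there is none).
Two vertices at distance `p` are joined by a geodesic whose minimum `x` splits it into pieces of
lengths `k + l = p`; the endpoint at distance `≤ s` from `x` sees colour `ρ x` at level `k`, and if
the other endpoint saw it at the same level, uniqueness of colours among weakly reachable vertices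
would force both to be seen through `x`, giving a walk of length `≤ 2s < p` between them.
-/

section Greedy

variable {α ι : Type*} [LinearOrder α] [Fintype α] [Fintype ι]

theorem exists_greedy_coloring (r : α → α → Prop) (hr : ∀ x y, r x y → x < y)
    (hcard : ∀ y, {x | r x y}.ncard < Fintype.card ι) :
    ∃ f : α → ι, ∀ x y, r x y → f x ≠ f y := by
  classical
  suffices ∀ s : Finset α, ∃ f : α → ι, ∀ x y, y ∈ s → r x y → f x ≠ f y by
    obtain ⟨f, hf⟩ := this Finset.univ
    exact ⟨f, fun x y => hf x y (Finset.mem_univ y)⟩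
  intro s
  induction s using Finset.induction_on_max with
  | empty => exact ⟨fun y => (Fintype.card_pos_iff.mp (pos_of_gt (hcard y))).some, by simp⟩
  | insert a s hlt ih =>
    obtain ⟨f, hf⟩ := ih
    have hpred : (Finset.univ.filter (r · a)).card < Fintype.card ι := by
      simpa [← Set.ncard_coe_finset] using hcard a
    obtain ⟨c, -, hc⟩ := Finset.exists_mem_notMem_of_card_lt_card
      (s := (Finset.univ.filter (r · a)).image f) (t := Finset.univ)
      (Finset.card_image_le.trans_lt hpred)
    refine ⟨Function.update f a c, fun x y hy hxy => ?_⟩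
    have hya : y ≤ a := (Finset.mem_insert.mp hy).elim (·.le) fun hy => (hlt y hy).le
    rw [Function.update_of_ne ((hr x y hxy).trans_le hya).ne]
    rcases Finset.mem_insert.mp hy with rfl | hy
    · rw [Function.update_self]
      rintro rfl
      exact hc (Finset.mem_image_of_mem f (by simpa using hxy))
    · rw [Function.update_of_ne (hlt y hy).ne]
      exact hf x y hy hxy

end Greedy

theorem exists_linearOrder_ncard_weaklyAccessible_lt_wcol [Finite V] (G : SimpleGraph V)
    (k : ℕ) : ∃ L : LinearOrder V, ∀ y, {x | WeaklyAccessible G L k x y}.ncard < wcol G k := by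
  have hne : {m | ∃ L : LinearOrder V, ∀ y, {x | WeaklyAccessible G L k x y}.ncard ≤ m}.Nonempty :=
    ⟨Nat.card V, IsWellOrder.linearOrder WellOrderingRel, fun _ => Set.ncard_le_card _⟩
  obtain ⟨L, hL⟩ := Nat.sInf_mem hne
  exact ⟨L, fun y => (hL y).trans_lt (by rw [wcol]; omega)⟩

section WeaklyReachable

variable [LinearOrder V] {G : SimpleGraph V} {k l : ℕ} {x y a b : V}

def WeaklyReachable (G : SimpleGraph V) (k : ℕ) (x y : V) : Prop :=
  ∃ w : G.Walk x y, w.length ≤ k ∧ ∀ z ∈ w.support, x ≤ z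

theorem WeaklyReachable.mono (h : WeaklyReachable G k x y) (hkl : k ≤ l) :
    WeaklyReachable G l x y :=
  let ⟨w, hw, hwx⟩ := h
  ⟨w, hw.trans hkl, hwx⟩

theorem WeaklyReachable.join (hx : WeaklyReachable G k x a) (hy : WeaklyReachable G l y a)
    (hxy : x ≤ y) : WeaklyReachable G (k + l) x y := by
  obtain ⟨w, hw, hwx⟩ := hx
  obtain ⟨w', hw', hwy⟩ := hy
  refine ⟨w.append w'.reverse, by simp only [Walk.length_append, Walk.length_reverse]; omega, fun z hz => ?_⟩
  rw [Walk.mem_support_append_iff, Walk.support_reverse, List.mem_reverse] at hz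
  exact hz.elim (hwx z) fun hz => hxy.trans (hwy z hz)

theorem WeaklyReachable.weaklyAccessible (h : WeaklyReachable G k x y) (hne : x ≠ y) :
    WeaklyAccessible G ‹_› k x y := by
  obtain ⟨w, hw, hwx⟩ := h
  refine ⟨(hwx y w.end_mem_support).lt_of_ne hne, w.bypass, w.bypass_isPath,
    w.length_bypass_le_length.trans hw, fun z hz hzx _ => ?_⟩
  exact (hwx z (w.support_bypass_subset_support hz)).lt_of_ne (Ne.symm hzx)

theorem SimpleGraph.Walk.exists_weaklyReachable_split (w : G.Walk a b) :
    ∃ x k l, WeaklyReachable G k x a ∧ WeaklyReachable G l x b ∧ k + l = w.length := by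
  obtain ⟨x, hx, hmin⟩ := w.support.toFinset.exists_min_image id ⟨a, by simp⟩
  simp only [List.mem_toFinset, id] at hx hmin
  refine ⟨x, (w.takeUntil x hx).length, (w.dropUntil x hx).length,
    ⟨(w.takeUntil x hx).reverse, (Walk.length_reverse _).le, fun z hz => ?_⟩,
    ⟨w.dropUntil x hx, le_rfl, fun z hz => hmin z (w.support_dropUntil_subset_support hx hz)⟩, ?_⟩
  · rw [Walk.support_reverse, List.mem_reverse] at hz
    exact hmin z (w.support_takeUntil_subset_support hx hz)
  · rw [← Walk.length_append, w.take_spec hx]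

end WeaklyReachable

section ReachCode

variable [LinearOrder V] {G : SimpleGraph V} {ι : Type*} {ρ : V → ι} {p s k l : ℕ}
  {u v x y a b : V} {i : ι}

theorem eq_of_weaklyReachable_of_eq (hρ : ∀ x y, WeaklyAccessible G ‹_› p x y → ρ x ≠ ρ y)
    (hx : WeaklyReachable G k x a) (hy : WeaklyReachable G l y a) (hkl : k + l ≤ p)
    (h : ρ x = ρ y) : x = y := by
  by_contra hne
  rcases le_total x y with hxy | hyx
  · exact hρ x y (((hx.join hy hxy).mono hkl).weaklyAccessible hne) h
  · exact hρ y x (((hy.join hx hyx).mono (by omega)).weaklyAccessible (Ne.symm hne)) h.symm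

/-- The shift by one frees the value `0` to mean that no vertex of colour `i` weakly
`s`-reaches `v`. -/
noncomputable def reachCode (G : SimpleGraph V) (ρ : V → ι) (s : ℕ) (v : V) (i : ι) : ℕ :=
  open Classical in
  if h : ∃ k, k ≤ s ∧ ∃ x, ρ x = i ∧ WeaklyReachable G k x v then Nat.find h + 1 else 0

theorem reachCode_lt : reachCode G ρ s v i < s + 2 := by
  classical
  unfold reachCode
  split_ifs with h
  · have := (Nat.find_spec h).1
    omega
  · omega

theorem exists_reachCode_eq_succ (hx : WeaklyReachable G k x v) (hk : k ≤ s) :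
    ∃ k' ≤ k, reachCode G ρ s v (ρ x) = k' + 1 := by
  classical
  have h : ∃ k, k ≤ s ∧ ∃ y, ρ y = ρ x ∧ WeaklyReachable G k y v := ⟨k, hk, x, rfl, hx⟩
  exact ⟨Nat.find h, Nat.find_min' h ⟨hk, x, rfl, hx⟩, by rw [reachCode, dif_pos h]⟩

theorem exists_weaklyReachable_of_reachCode_eq_succ (h : reachCode G ρ s v i = k + 1) :
    ∃ x, ρ x = i ∧ WeaklyReachable G k x v := by
  classical
  unfold reachCode at h
  split_ifs at h with hex
  · obtain ⟨-, hspec⟩ := Nat.find_spec hex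
    rwa [Nat.succ_inj.mp h] at hspec

theorem reachCode_ne (hρ : ∀ x y, WeaklyAccessible G ‹_› p x y → ρ x ≠ ρ y) (hs : 2 * s < p)
    (hxa : WeaklyReachable G k x a) (hk : k ≤ s) (hxb : WeaklyReachable G l x b)
    (hkl : k + l ≤ p) (hab : G.dist a b = p) :
    reachCode G ρ s a (ρ x) ≠ reachCode G ρ s b (ρ x) := by
  intro heq
  obtain ⟨k', hk'k, hcode⟩ := exists_reachCode_eq_succ (ρ := ρ) hxa hk
  obtain ⟨xa, hρa, hxa'⟩ := exists_weaklyReachable_of_reachCode_eq_succ hcode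
  obtain ⟨xb, hρb, hxb'⟩ := exists_weaklyReachable_of_reachCode_eq_succ (heq ▸ hcode)
  obtain rfl : xa = x := eq_of_weaklyReachable_of_eq hρ hxa' hxa (by omega) hρa
  obtain rfl : xb = xa := eq_of_weaklyReachable_of_eq hρ hxb' hxb (by omega) hρb
  obtain ⟨wa, hwa, -⟩ := hxa'
  obtain ⟨wb, hwb, -⟩ := hxb'
  have := G.dist_le (wa.reverse.append wb)
  simp only [Walk.length_append, Walk.length_reverse] at this
  omega

theorem exists_reachCode_ne (hρ : ∀ x y, WeaklyAccessible G ‹_› p x y → ρ x ≠ ρ y)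
    (hps : p = 2 * s + 1) (huv : G.Reachable u v) (hd : G.dist u v = p) :
    ∃ i, reachCode G ρ s u i ≠ reachCode G ρ s v i := by
  obtain ⟨w, hw⟩ := huv.exists_walk_length_eq_dist
  obtain ⟨x, k, l, hk, hl, hkl⟩ := w.exists_weaklyReachable_split
  refine ⟨ρ x, ?_⟩
  rcases le_or_gt k s with hks | hls
  · exact reachCode_ne hρ (by omega) hk hks hl (by omega) hd
  · exact (reachCode_ne hρ (by omega) hl (by omega) hk (by omega) (by rwa [dist_comm])).symm

end ReachCode

/-- Theorem 11(a): for odd positive `p`, a finite graph `G`, and `q = wcol_p(G)`,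
`χ(G^[♮p]) ≤ (⌊p/2⌋+2)^q`. -/
theorem chromaticNumber_exactDistanceGraph_le_pow_wcol
    [Fintype V] (G : SimpleGraph V) (p : ℕ) (hp : Odd p) (q : ℕ) (hq : q = wcol G p) :
    (exactDistanceGraph G p).chromaticNumber ≤ (((p / 2 + 2) ^ q : ℕ) : ℕ∞) := by
  obtain ⟨L, hL⟩ := exists_linearOrder_ncard_weaklyAccessible_lt_wcol G p
  let _ := L
  obtain ⟨ρ, hρ⟩ := exists_greedy_coloring (ι := Fin q) (WeaklyAccessible G L p)
    (fun _ _ h => h.1) (by simpa [hq] using hL)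
  have hps : p = 2 * (p / 2) + 1 := by
    obtain ⟨t, rfl⟩ := hp
    omega
  let C : (exactDistanceGraph G p).Coloring (Fin q → Fin (p / 2 + 2)) :=
    Coloring.mk (fun v i => ⟨reachCode G ρ (p / 2) v i, reachCode_lt⟩) fun ⟨_, huv, hd⟩ hc => by
      obtain ⟨i, hi⟩ := exists_reachCode_ne hρ hps huv hd
      exact hi (congrArg Fin.val (congrFun hc i))
  simpa using C.colorable.chromaticNumber_le
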